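/- Let R be a commutative ring that is either a field or a countable principal ideal domain. If (M_i, g_i) is an inverse sequence of countably generated R-modules that does not satisfy the Mittag-Leffler condition, then the derived limit lim¹ M_i (the cokernel of the Eilenberg map) is not a countably generated R-module; in particular it is nonzero. -/

import Mathlib

/-- The Eilenberg map `Δ : ∏ᵢ Mᵢ → ∏ᵢ Mᵢ`, `Δ((mᵢ)ᵢ) = (mᵢ − gᵢ(m_{i+1}))ᵢ`, of an inverse
sequence of `R`-modules `(Mᵢ, gᵢ)`. -/
noncomputable def eilenberg (R : Type) [CommRing R] (M : ℕ → Type)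
    [∀ i, AddCommGroup (M i)] [∀ i, Module R (M i)]
    (g : ∀ i : ℕ, M (i + 1) →ₗ[R] M i) : ((i : ℕ) → M i) →ₗ[R] ((i : ℕ) → M i) where
  toFun x := fun i => x i - g i (x (i + 1))
  map_add' x y := by
    funext i
    simp only [Pi.add_apply, map_add]
    abel
  map_smul' c x := by
    funext i
    simp only [Pi.smul_apply, map_smul, RingHom.id_apply, smul_sub]

/-- The inverse limit `lim Mᵢ` of an inverse sequence, as the kernel of the Eilenberg map. -/
noncomputable def invLim (R : Type) [CommRing R] (M : ℕ → Type)
    [∀ i, AddCommGroup (M i)] [∀ i, Module R (M i)]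
    (g : ∀ i : ℕ, M (i + 1) →ₗ[R] M i) : Submodule R ((i : ℕ) → M i) :=
  LinearMap.ker (eilenberg R M g)

/-- The derived limit `lim¹ Mᵢ` of an inverse sequence, as the cokernel of the Eilenberg map. -/
noncomputable abbrev derivedLim (R : Type) [CommRing R] (M : ℕ → Type)
    [∀ i, AddCommGroup (M i)] [∀ i, Module R (M i)]
    (g : ∀ i : ℕ, M (i + 1) →ₗ[R] M i) : Type :=
  ((i : ℕ) → M i) ⧸ LinearMap.range (eilenberg R M g)

/-- The projection `lim Mᵢ → M_k`. -/
noncomputable def limProj (R : Type) [CommRing R] (M : ℕ → Type)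
    [∀ i, AddCommGroup (M i)] [∀ i, Module R (M i)]
    (g : ∀ i : ℕ, M (i + 1) →ₗ[R] M i) (k : ℕ) : ↥(invLim R M g) →ₗ[R] M k :=
  (LinearMap.proj k).comp (invLim R M g).subtype

/-- The composite bonding map `f_i^{i+j} : M_{i+j} → M_i` of an inverse sequence. -/
noncomputable def transDown (R : Type) [CommRing R] (M : ℕ → Type)
    [∀ i, AddCommGroup (M i)] [∀ i, Module R (M i)]
    (g : ∀ i : ℕ, M (i + 1) →ₗ[R] M i) : (i j : ℕ) → M (i + j) →ₗ[R] M i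
  | _, 0 => LinearMap.id
  | i, j + 1 => (transDown R M g i j).comp (g (i + j))

/-- An inverse sequence satisfies the *Mittag-Leffler condition* if for every `i` the
decreasing sequence of images `range f_i^j ⊆ M_i` is eventually constant. -/
def MittagLeffler (R : Type) [CommRing R] (M : ℕ → Type)
    [∀ i, AddCommGroup (M i)] [∀ i, Module R (M i)]
    (g : ∀ i : ℕ, M (i + 1) →ₗ[R] M i) : Prop :=
  ∀ i : ℕ, ∃ j : ℕ, ∀ k : ℕ,
    LinearMap.range (transDown R M g i (j + k)) = LinearMap.range (transDown R M g i j)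

/-- An inverse sequence is *stable* if it satisfies the Mittag-Leffler condition and the
projections `lim Mᵢ → Mᵢ` are injective for all sufficiently large `i`. -/
def IsStable (R : Type) [CommRing R] (M : ℕ → Type)
    [∀ i, AddCommGroup (M i)] [∀ i, Module R (M i)]
    (g : ∀ i : ℕ, M (i + 1) →ₗ[R] M i) : Prop :=
  MittagLeffler R M g ∧ ∃ i₀ : ℕ, ∀ i : ℕ, i₀ ≤ i → Function.Injective (limProj R M g i)

/-- An `R`-module is *countably generated* if it is the span of a countable subset. -/
def CountablyGeneratedMod (R : Type) (M : Type) [CommRing R] [AddCommGroup M]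
    [Module R M] : Prop :=
  ∃ S : Set M, S.Countable ∧ Submodule.span R S = ⊤

/-!
If the Mittag-Leffler condition fails at `i₀`, there are indices `n 0 < n 1 < ⋯` and elements
`a k = f_{i₀}^{i₀ + n k} (b k)` with `a k ∉ A (n (k + 1))`, where `A j ⊆ M i₀` is the image of
`M (i₀ + j)`. Sending `x ∈ ∏ Mᵢ` to its partial sums `∑_{m < n j} f_{i₀}^{i₀+m} (x (i₀+m))` modulo
`A (n j)`, and then modulo the diagonal copy of `M i₀`, kills the range of the Eilenberg map,
since the partial sums of `Δ y` telescope to `y i₀` modulo `A (n j)`; so it factors through `lim¹`.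
Placing `t k • b k` in coordinate `i₀ + n k` gives partial sums `∑_{k < j} t k • a k`, and these
determine `t`: for every `t` over a field, and for `t ∈ {0, 1}^ℕ` over any ring. Over a field,
`K^ℕ` of uncountable dimension would thus have dimension at most `dim lim¹ + dim M i₀ ≤ ℵ₀`; over
a countable ring, the uncountable set `{0, 1}^ℕ` would inject into the preimage of the countable
image of `lim¹` under a quotient map with countable kernel.
-/

open Cardinal

universe u

section CountablyGenerated

variable {R N : Type} [CommRing R] [AddCommGroup N] [Module R N]

theorem CountablyGeneratedMod.of_subsingleton [Subsingleton N] : CountablyGeneratedMod R N :=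
  ⟨∅, Set.countable_empty, Subsingleton.elim _ _⟩

theorem CountablyGeneratedMod.countable [Countable R] (h : CountablyGeneratedMod R N) :
    Countable N := by
  obtain ⟨S, hS, hspan⟩ := h
  have := hS.to_subtype
  have hsurj : Function.Surjective (Finsupp.linearCombination R ((↑) : S → N)) := by
    rw [← LinearMap.range_eq_top, ← Finsupp.span_eq_range_linearCombination, hspan]
  exact hsurj.countable

theorem CountablyGeneratedMod.rank_le_aleph0 [StrongRankCondition R]
    (h : CountablyGeneratedMod R N) : Module.rank R N ≤ ℵ₀ := by
  obtain ⟨S, hS, hspan⟩ := h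
  calc Module.rank R N = Module.rank R (Submodule.span R S) := by rw [hspan, rank_top]
    _ ≤ #S := rank_span_le S
    _ ≤ ℵ₀ := hS.le_aleph0

end CountablyGenerated

instance : Uncountable (ℕ → Bool) := by
  rw [← aleph0_lt_mk_iff, ← power_def]
  simpa using cantor ℵ₀

theorem aleph0_lt_rank_nat_fun (K : Type*) [DivisionRing K] : ℵ₀ < Module.rank K (ℕ → K) := by
  rw [rank_fun_infinite, mk_arrow, mk_nat]
  simpa using cantor' ℵ₀ (one_lt_iff_nontrivial.mpr inferInstance)

theorem Submodule.countable_preimage_mkQ {R C : Type*} [Ring R] [AddCommGroup C] [Module R C]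
    (p : Submodule R C) (hp : (p : Set C).Countable) {T : Set (C ⧸ p)} (hT : T.Countable) :
    (p.mkQ ⁻¹' T).Countable := by
  obtain ⟨r, hr⟩ := (Submodule.Quotient.mk_surjective p).hasRightInverse
  refine ((hT.image r).image2 hp (· + ·)).mono fun c hc => ?_
  have hmem : c - r (p.mkQ c) ∈ p := (Submodule.Quotient.eq p).mp (hr _).symm
  exact ⟨r (p.mkQ c), Set.mem_image_of_mem r hc, _, hmem, add_sub_cancel _ _⟩

theorem LinearMap.rank_le_rank_range_mkQ_comp_add_rank {K : Type*} {V C : Type u}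
    [DivisionRing K] [AddCommGroup V] [Module K V] [AddCommGroup C] [Module K C]
    {f : V →ₗ[K] C} (hf : Function.Injective f) (p : Submodule K C) :
    Module.rank K V ≤ Module.rank K (LinearMap.range (p.mkQ ∘ₗ f)) + Module.rank K p := by
  rw [← (p.mkQ ∘ₗ f).rank_range_add_rank_ker, LinearMap.ker_comp, Submodule.ker_mkQ]
  gcongr
  exact LinearMap.rank_le_of_injective (f.restrict fun _ h => h)
    fun x y hxy => Subtype.ext (hf (congrArg Subtype.val hxy))

section SeriesMod

variable {R N : Type*} [Ring R] [AddCommGroup N] [Module R N] (A : ℕ → Submodule R N)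

def diagMod : N →ₗ[R] (j : ℕ) → N ⧸ A j :=
  LinearMap.pi fun j => (A j).mkQ

@[simp]
theorem diagMod_apply (x : N) (j : ℕ) : diagMod A x j = Submodule.Quotient.mk x := rfl

variable (a : ℕ → N)

def seriesMod : (ℕ → R) →ₗ[R] (j : ℕ) → N ⧸ A j :=
  LinearMap.pi fun j => (A j).mkQ ∘ₗ ∑ k ∈ Finset.range j, (LinearMap.proj k).smulRight (a k)

@[simp]
theorem seriesMod_apply (t : ℕ → R) (j : ℕ) :
    seriesMod A a t j = Submodule.Quotient.mk (∑ k ∈ Finset.range j, t k • a k) := by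
  simp only [seriesMod, LinearMap.pi_apply, LinearMap.comp_apply, LinearMap.coe_sum,
    Finset.sum_apply, LinearMap.smulRight_apply, LinearMap.proj_apply, Submodule.mkQ_apply]

variable {A a}

theorem eq_zero_of_seriesMod_eq_zero {c : ℕ → R} (h : seriesMod A a c = 0)
    (hc : ∀ k, c k • a k ∈ A (k + 1) → c k = 0) : c = 0 := by
  suffices ∀ k, c k = 0 from funext this
  intro k
  induction k using Nat.strong_induction_on with
  | _ k ih =>
    apply hc
    have hk := congrFun h (k + 1)
    rwa [seriesMod_apply, Pi.zero_apply, Submodule.Quotient.mk_eq_zero, Finset.sum_range_succ,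
      Finset.sum_eq_zero fun l hl => by rw [ih l (Finset.mem_range.mp hl), zero_smul],
      zero_add] at hk

theorem seriesMod_injective {K : Type*} [DivisionRing K] [Module K N] {A : ℕ → Submodule K N}
    (ha : ∀ k, a k ∉ A (k + 1)) : Function.Injective (seriesMod A a) := by
  refine (injective_iff_map_eq_zero _).mpr fun c hc => eq_zero_of_seriesMod_eq_zero hc ?_
  intro k hk
  by_contra hck
  exact ha k ((Submodule.smul_mem_iff _ hck).mp hk)

theorem seriesMod_boolIndicator_injective (ha : ∀ k, a k ∉ A (k + 1)) :
    Function.Injective fun s : ℕ → Bool => seriesMod A a fun k => if s k then 1 else 0 := by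
  have : Nontrivial R := ⟨1, 0, fun h => ha 0 (by
    rw [← one_smul R (a 0), h, zero_smul]
    exact zero_mem _)⟩
  intro s s' h
  rw [← sub_eq_zero, ← map_sub] at h
  have hzero := eq_zero_of_seriesMod_eq_zero h fun k hk => by
    cases hs : s k <;> cases hs' : s' k <;> simp [hs, hs'] at hk ⊢ <;> exact ha k hk
  funext k
  have := congrFun hzero k
  cases hs : s k <;> cases hs' : s' k <;> simp_all

end SeriesMod

noncomputable section InverseSequence

variable {R : Type} [CommRing R] {M : ℕ → Type} [∀ i, AddCommGroup (M i)] [∀ i, Module R (M i)]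
  (g : ∀ i : ℕ, M (i + 1) →ₗ[R] M i)

def transDownRange (i j : ℕ) : Submodule R (M i) :=
  LinearMap.range (transDown R M g i j)

theorem transDownRange_antitone (i : ℕ) : Antitone (transDownRange g i) :=
  antitone_nat_of_succ_le fun _ => LinearMap.range_comp_le_range _ _

theorem exists_transDown_notMem_of_not_mittagLeffler (h : ¬ MittagLeffler R M g) :
    ∃ (i₀ : ℕ) (n : ℕ → ℕ), StrictMono n ∧
      ∀ k, ∃ b : M (i₀ + n k), transDown R M g i₀ (n k) b ∉ transDownRange g i₀ (n (k + 1)) := by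
  simp only [MittagLeffler, not_forall, not_exists] at h
  obtain ⟨i₀, h⟩ := h
  choose K hK using h
  have hK' : ∀ j, ¬ transDownRange g i₀ j ≤ transDownRange g i₀ (j + K j) := fun j hle =>
    hK j ((transDownRange_antitone g i₀ (Nat.le_add_right j (K j))).antisymm hle)
  have hpos : ∀ j, 0 < K j := fun j => Nat.pos_of_ne_zero fun h0 => hK' j (by rw [h0, add_zero])
  let n : ℕ → ℕ := fun k => Nat.rec 0 (fun _ m => m + K m) k
  refine ⟨i₀, n, strictMono_nat_of_lt_succ fun k => Nat.lt_add_of_pos_right (hpos _), fun k => ?_⟩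
  obtain ⟨_, ⟨b, rfl⟩, hb⟩ := SetLike.not_le_iff_exists.mp (hK' (n k))
  exact ⟨b, hb⟩

def partialSum (i₀ N : ℕ) : ((i : ℕ) → M i) →ₗ[R] M i₀ :=
  ∑ m ∈ Finset.range N, transDown R M g i₀ m ∘ₗ LinearMap.proj (i₀ + m)

theorem partialSum_apply (i₀ N : ℕ) (x : (i : ℕ) → M i) :
    partialSum g i₀ N x = ∑ m ∈ Finset.range N, transDown R M g i₀ m (x (i₀ + m)) := by
  simp [partialSum]

theorem partialSum_eilenberg (i₀ N : ℕ) (y : (i : ℕ) → M i) :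
    partialSum g i₀ N (eilenberg R M g y) = y i₀ - transDown R M g i₀ N (y (i₀ + N)) := by
  rw [partialSum_apply]
  exact (Finset.sum_congr rfl fun m _ =>
      map_sub (transDown R M g i₀ m) (y (i₀ + m)) (g (i₀ + m) (y (i₀ + m + 1)))).trans
    (Finset.sum_range_sub' (fun m => transDown R M g i₀ m (y (i₀ + m))) N)

theorem partialSum_congr {i₀ N : ℕ} {x y : (i : ℕ) → M i}
    (h : ∀ m < N, x (i₀ + m) = y (i₀ + m)) : partialSum g i₀ N x = partialSum g i₀ N y := by
  simp only [partialSum_apply]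
  exact Finset.sum_congr rfl fun m hm => by rw [h m (Finset.mem_range.mp hm)]

theorem partialSum_single {i₀ N m : ℕ} (hm : m < N) (y : M (i₀ + m)) :
    partialSum g i₀ N (Pi.single (i₀ + m) y) = transDown R M g i₀ m y := by
  rw [partialSum_apply, Finset.sum_eq_single_of_mem m (Finset.mem_range.mpr hm)]
  · rw [Pi.single_eq_same]
  · intro l _ hl
    rw [Pi.single_eq_of_ne (by omega), map_zero]

variable {i₀ : ℕ} {n : ℕ → ℕ} (b : ∀ k, M (i₀ + n k))

/-- The element of `∏ Mᵢ` with `t k • b k` in coordinate `i₀ + n k` and `0` elsewhere; for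
strictly monotone `n` only `k ≤ i` can contribute to coordinate `i`. -/
def spread (t : ℕ → R) : (i : ℕ) → M i :=
  fun i => (∑ k ∈ Finset.range (i + 1), t k • Pi.single (i₀ + n k) (b k)) i

theorem spread_apply_of_lt (hn : StrictMono n) (t : ℕ → R) {i j : ℕ} (hi : i < i₀ + n j) :
    spread b t i = (∑ k ∈ Finset.range j, t k • Pi.single (i₀ + n k) (b k)) i := by
  have hvanish : ∀ s : Finset ℕ, ∀ k ∈ s,
      (t k • Pi.single (M := M) (i₀ + n k) (b k)) i ≠ 0 → i₀ + n k = i := fun _ k _ hk => by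
    by_contra hne
    exact hk (by rw [Pi.smul_apply, Pi.single_eq_of_ne (Ne.symm hne), smul_zero])
  simp only [spread, Finset.sum_apply]
  rw [← Finset.sum_filter_of_ne (hvanish (Finset.range (i + 1))),
    ← Finset.sum_filter_of_ne (hvanish (Finset.range j))]
  congr 1
  ext k
  simp only [Finset.mem_filter, Finset.mem_range, and_congr_left_iff]
  rintro rfl
  have : k ≤ n k := hn.id_le k
  exact iff_of_true (by omega) (hn.lt_iff_lt.mp (by omega))

theorem partialSum_spread (hn : StrictMono n) (t : ℕ → R) (j : ℕ) :
    partialSum g i₀ (n j) (spread b t) =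
      ∑ k ∈ Finset.range j, t k • transDown R M g i₀ (n k) (b k) := by
  rw [partialSum_congr g fun m hm => spread_apply_of_lt b hn t (Nat.add_lt_add_left hm i₀),
    map_sum]
  refine Finset.sum_congr rfl fun k hk => ?_
  rw [map_smul, partialSum_single g (hn (Finset.mem_range.mp hk))]

variable (i₀ n)

def partialSumsMod : ((i : ℕ) → M i) →ₗ[R] (j : ℕ) → M i₀ ⧸ (transDownRange g i₀ ∘ n) j :=
  LinearMap.pi fun j => (transDownRange g i₀ (n j)).mkQ ∘ₗ partialSum g i₀ (n j)

@[simp]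
theorem partialSumsMod_apply (x : (i : ℕ) → M i) (j : ℕ) :
    partialSumsMod g i₀ n x j = Submodule.Quotient.mk (partialSum g i₀ (n j) x) := rfl

theorem partialSumsMod_eilenberg (y : (i : ℕ) → M i) :
    partialSumsMod g i₀ n (eilenberg R M g y) = diagMod (transDownRange g i₀ ∘ n) (y i₀) := by
  funext j
  rw [partialSumsMod_apply, diagMod_apply, partialSum_eilenberg, Submodule.Quotient.eq,
    sub_sub_cancel_left]
  exact neg_mem (LinearMap.mem_range_self _ _)

theorem range_eilenberg_le_ker_mkQ_comp_partialSumsMod :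
    LinearMap.range (eilenberg R M g) ≤
      LinearMap.ker ((LinearMap.range (diagMod (transDownRange g i₀ ∘ n))).mkQ ∘ₗ
        partialSumsMod g i₀ n) := by
  rintro _ ⟨y, rfl⟩
  rw [LinearMap.mem_ker, LinearMap.comp_apply, partialSumsMod_eilenberg, Submodule.mkQ_apply,
    Submodule.Quotient.mk_eq_zero]
  exact LinearMap.mem_range_self _ _

def derivedLimPartialSums : derivedLim R M g →ₗ[R]
    ((j : ℕ) → M i₀ ⧸ (transDownRange g i₀ ∘ n) j) ⧸
      LinearMap.range (diagMod (transDownRange g i₀ ∘ n)) :=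
  (LinearMap.range (eilenberg R M g)).liftQ
    ((LinearMap.range (diagMod (transDownRange g i₀ ∘ n))).mkQ ∘ₗ partialSumsMod g i₀ n)
    (range_eilenberg_le_ker_mkQ_comp_partialSumsMod g i₀ n)

variable {i₀ n}

theorem mkQ_seriesMod_mem_range_derivedLimPartialSums (hn : StrictMono n) (t : ℕ → R) :
    (LinearMap.range (diagMod (transDownRange g i₀ ∘ n))).mkQ
        (seriesMod (transDownRange g i₀ ∘ n) (fun k => transDown R M g i₀ (n k) (b k)) t) ∈
      LinearMap.range (derivedLimPartialSums g i₀ n) := by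
  refine ⟨Submodule.Quotient.mk (spread b t), ?_⟩
  have : partialSumsMod g i₀ n (spread b t) =
      seriesMod (transDownRange g i₀ ∘ n) (fun k => transDown R M g i₀ (n k) (b k)) t := by
    funext j
    rw [partialSumsMod_apply, seriesMod_apply, partialSum_spread g b hn]
  rw [derivedLimPartialSums, Submodule.liftQ_apply, LinearMap.comp_apply, this]

theorem not_countablyGenerated_derivedLim_of_isField (hR : IsField R)
    (hM : CountablyGeneratedMod R (M i₀)) (hn : StrictMono n)
    (hb : ∀ k, transDown R M g i₀ (n k) (b k) ∉ transDownRange g i₀ (n (k + 1))) : ¬ CountablyGeneratedMod R (derivedLim R M g) := by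
  intro hlim
  let := hR.toField
  have h1 := LinearMap.rank_le_rank_range_mkQ_comp_add_rank (seriesMod_injective hb)
    (LinearMap.range (diagMod (transDownRange g i₀ ∘ n)))
  have h3 := (rank_range_le (diagMod (transDownRange g i₀ ∘ n))).trans hM.rank_le_aleph0
  refine (aleph0_lt_rank_nat_fun R).not_ge
    (h1.trans ((add_le_add ?_ h3).trans aleph0_add_aleph0.le))
  refine (Submodule.rank_mono ?_).trans
    ((rank_range_le (derivedLimPartialSums g i₀ n)).trans hlim.rank_le_aleph0)
  rintro _ ⟨t, rfl⟩
  exact mkQ_seriesMod_mem_range_derivedLimPartialSums g b hn t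

theorem not_countablyGenerated_derivedLim_of_countable [Countable R]
    (hM : CountablyGeneratedMod R (M i₀)) (hn : StrictMono n)
    (hb : ∀ k, transDown R M g i₀ (n k) (b k) ∉ transDownRange g i₀ (n (k + 1))) : ¬ CountablyGeneratedMod R (derivedLim R M g) := by
  intro hlim
  have := hlim.countable
  have := hM.countable
  have hS := Submodule.countable_preimage_mkQ _
    (by rw [LinearMap.coe_range]; exact Set.countable_range _)
    (Set.countable_range (derivedLimPartialSums g i₀ n))
  refine not_countable (α := ℕ → Bool) (Set.countable_univ_iff.mp ?_)
  exact Set.MapsTo.countable_of_injOn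
    (f := fun s : ℕ → Bool => seriesMod _ _ fun k => if s k then (1 : R) else 0)
    (fun s _ => mkQ_seriesMod_mem_range_derivedLimPartialSums g b hn _)
    (seriesMod_boolIndicator_injective hb).injOn hS

end InverseSequence

/-- Let `R` be a field or a countable PID.  If `(Mᵢ, gᵢ)` is an inverse sequence of countably
generated `R`-modules that does not satisfy the Mittag-Leffler condition, then the derived
limit `lim¹ Mᵢ` is not a countably generated `R`-module; in particular it is nonzero. -/
theorem derivedLim_not_countablyGenerated_of_not_mittagLeffler
    (R : Type) [CommRing R]
    (hR : IsField R ∨ (Countable R ∧ IsDomain R ∧ IsPrincipalIdealRing R))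
    (M : ℕ → Type) [∀ i, AddCommGroup (M i)] [∀ i, Module R (M i)]
    (g : ∀ i : ℕ, M (i + 1) →ₗ[R] M i)
    (hcg : ∀ i : ℕ, CountablyGeneratedMod R (M i))
    (hml : ¬ MittagLeffler R M g) :
    ¬ CountablyGeneratedMod R (derivedLim R M g) ∧ Nontrivial (derivedLim R M g) := by
  have hnot : ¬ CountablyGeneratedMod R (derivedLim R M g) := by
    obtain ⟨i₀, n, hn, ha⟩ := exists_transDown_notMem_of_not_mittagLeffler g hml
    choose b hb using ha
    rcases hR with hR | ⟨_, -, -⟩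
    · exact not_countablyGenerated_derivedLim_of_isField g b hR (hcg i₀) hn hb
    · exact not_countablyGenerated_derivedLim_of_countable g b (hcg i₀) hn hb
  exact ⟨hnot, not_subsingleton_iff_nontrivial.mp fun _ => hnot .of_subsingleton⟩
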